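/- arXiv:0710.3760 — 2 statements merged into one kernel-verified Lean document; each statement's English description precedes it below -/
import Mathlib

section
/- For every k ≥ 1, every n ≥ 0 and every binary string x_{-n}^0 ∈ {0,1}^{n+1}, P(X̃_{-n}^0 = x_{-n}^0, λ̂_k(X̃_{-∞}^0) = n) = P(X_{-n}^0 = x_{-n}^0, λ̂_k(X_{-∞}^0) = n), where λ̂_k is the backward recurrence stopping time applied to a one-sided sequence. -/
open MeasureTheory Filter Finset

/-- Two-sided binary sequences: the sample space of the process `X_n(ω) = ω n`. -/
abbrev BSeq := ℤ → Bool

/-- The left shift on two-sided sequences. -/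
def shift : BSeq → BSeq := fun ω n => ω (n + 1)

/-- The recurrence stopping times `λ_k`:  `λ_0 = 0`,
`λ_{k+1} = λ_k + min {t > 0 : X_t^{λ_k + t} = X_0^{λ_k}}`. -/
noncomputable def lam : ℕ → BSeq → ℕ
  | 0, _ => 0
  | k + 1, ω =>
      lam k ω +
        sInf {t : ℕ | 0 < t ∧ ∀ i : ℕ, i ≤ lam k ω → ω ((t : ℤ) + (i : ℤ)) = ω (i : ℤ)}

/-- The increments `τ_k = λ_k - λ_{k-1}`. -/
noncomputable def tau (k : ℕ) (ω : BSeq) : ℕ := lam k ω - lam (k - 1) ω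

/-- The auxiliary process `X̃`:  `X̃_{-n} = X_{λ_n - n}` (so that `X̃_{-λ_k}^0 = X_0^{λ_k}`).
Here `tildeX n ω` stands for `X̃_{-n}(ω)`. -/
noncomputable def tildeX (n : ℕ) (ω : BSeq) : Bool := ω ((lam n ω : ℤ) - (n : ℤ))

/-- The one-sided sequence `X̃_0, X̃_{-1}, X̃_{-2}, …`. -/
noncomputable def tilSeq (ω : BSeq) : ℕ → Bool := fun j => tildeX j ω

/-- The one-sided past `X_0, X_{-1}, X_{-2}, …` of the original process. -/
def past (ω : BSeq) : ℕ → Bool := fun j => ω (-(j : ℤ))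

/-- Backward recurrence stopping times `λ̂_k` for a one-sided sequence
`y = (Y_0, Y_{-1}, Y_{-2}, …)` (with `y j = Y_{-j}`):  `λ̂_0 = 0`,
`λ̂_{k+1} = λ̂_k + min {t > 0 : Y_{-λ̂_k - t}^{-t} = Y_{-λ̂_k}^0}`. -/
noncomputable def hlam : ℕ → (ℕ → Bool) → ℕ
  | 0, _ => 0
  | k + 1, y => hlam k y + sInf {t : ℕ | 0 < t ∧ ∀ i : ℕ, i ≤ hlam k y → y (t + i) = y i}

/-- The backward increments `τ̂_k = λ̂_k - λ̂_{k-1}`. -/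
noncomputable def tauhat (k : ℕ) (y : ℕ → Bool) : ℕ := hlam k y - hlam (k - 1) y

/-- The observation map recording the finite data segment `X_0^{L(ω)}`
(coded over `ℕ`, with `2` marking unobserved coordinates). -/
noncomputable def obs (L : BSeq → ℕ) (ω : BSeq) : ℕ → ℕ :=
  fun n => if n ≤ L ω then (if ω (n : ℤ) then 1 else 0) else 2

/-- The σ-algebra `σ(X_0^{λ_k})`. -/
noncomputable def Fk (k : ℕ) : MeasurableSpace BSeq :=
  MeasurableSpace.comap (obs (lam k)) (inferInstance : MeasurableSpace (ℕ → ℕ))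

/-- The σ-algebra `σ(X_0^{λ_k + 1})`. -/
noncomputable def Gk (k : ℕ) : MeasurableSpace BSeq :=
  MeasurableSpace.comap (obs (fun ω => lam k ω + 1)) (inferInstance : MeasurableSpace (ℕ → ℕ))

/-- The output following the `k`-th recurrence: `X_{λ_k + 1}` (as a real number). -/
noncomputable def Xnext (k : ℕ) (ω : BSeq) : ℝ := if ω ((lam k ω : ℤ) + 1) then 1 else 0

/-- The estimator `P_k = (1/(k-1)) ∑_{j=1}^{k-1} X_{λ_j + 1}`. -/
noncomputable def Pk (k : ℕ) (ω : BSeq) : ℝ :=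
  (1 / ((k : ℝ) - 1)) * ∑ j ∈ Finset.Icc 1 (k - 1), Xnext j ω

/-- The conditional probability `Δ_k = P(X_{λ_k+1} = 1 | X_0^{λ_k})`. -/
noncomputable def Delta (μ : Measure BSeq) (k : ℕ) : BSeq → ℝ := μ[Xnext k | Fk k]

/-- The recurrence time `R(l)` of the length-`(l+1)` past:
`R(l) = min {j ≥ l+1 : X_{-l-j}^{-j} = X_{-l}^0}`. -/
noncomputable def Rrec (l : ℕ) (ω : BSeq) : ℕ :=
  sInf {j : ℕ | l + 1 ≤ j ∧ ∀ i : ℕ, i ≤ l → ω (-(j : ℤ) - (i : ℤ)) = ω (-(i : ℤ))}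

/-- The probability of the block `x_0^n`. -/
noncomputable def blockProb (μ : Measure BSeq) (n : ℕ) (x : ℕ → Bool) : ENNReal :=
  μ {ω | ∀ i : ℕ, i ≤ n → ω (i : ℤ) = x i}

/-- The `n`-th entropy term `-(1/(n+1)) E log₂ p(X_0, …, X_n)`. -/
noncomputable def entropyTerm (μ : Measure BSeq) (n : ℕ) : ℝ :=
  -(1 / ((n : ℝ) + 1)) *
    ∫ ω, Real.logb 2 ((blockProb μ n (fun i => ω (i : ℤ))).toReal) ∂μ

/-!
The window `X_0^{λ_k}` ends with a copy of each earlier window `X_0^{λ_j}`, so reading it backwards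
reproduces `X̃_0, …, X̃_{-λ_k}` and gives back the same recurrence times: `λ̂_k(X̃) = λ_k` and
`X̃_{-i} = X_{λ_k - i}` for `i ≤ λ_k`. Hence, up to the null sets where some recurrence fails
(Poincaré recurrence for the shift and its inverse), the event `{X̃_{-n}^0 = x, λ̂_k(X̃) = n}` is
the preimage under `n` shifts of `{X_{-n}^0 = x, λ̂_k(X_{-∞}^0) = n}`, and stationarity concludes.
-/

def recSet {β : Type*} (y : ℕ → β) (m : ℕ) : Set ℕ :=
  {t : ℕ | 0 < t ∧ ∀ i : ℕ, i ≤ m → y (t + i) = y i}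

def Recurrent {β : Type*} (y : ℕ → β) : Prop := ∀ m, (recSet y m).Nonempty

theorem ae_recurrent_of_conservative {α β : Type*} [MeasurableSpace α] [TopologicalSpace α]
    [SecondCountableTopology α] [OpensMeasurableSpace α] [TopologicalSpace β] [DiscreteTopology β]
    {μ : Measure α} {f : α → α} (hf : Conservative f μ) {g : α → ℕ → β} (hg : Continuous g)
    (hgf : ∀ a i, g (f a) i = g a (i + 1)) : ∀ᵐ a ∂μ, Recurrent (g a) := by
  have hiter : ∀ t a i, g (f^[t] a) i = g a (t + i) := by
    intro t
    induction t with
    | zero => simp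
    | succ t ih =>
      intro a i
      rw [Function.iterate_succ_apply, ih, hgf]
      exact congrArg (g a) (by omega)
  filter_upwards [hf.ae_frequently_mem_of_mem_nhds] with a ha m
  have hcyl : g ⁻¹' (Set.Iic m).pi (fun i => {g a i}) ∈ nhds a :=
    hg.continuousAt.preimage_mem_nhds <|
      (isOpen_set_pi (Set.finite_Iic m) fun _ _ => isOpen_discrete _).mem_nhds fun _ _ => rfl
  obtain ⟨t, ht, hmem⟩ := (ha _ hcyl).forall_exists_of_atTop 1
  exact ⟨t, ht, fun i hi => (hiter t a i).symm.trans (hmem i hi)⟩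

section Combinatorics

variable {y a b : ℕ → Bool}

lemma hlam_succ (k : ℕ) (y : ℕ → Bool) :
    hlam (k + 1) y = hlam k y + sInf (recSet y (hlam k y)) := rfl

lemma hlam_mono (y : ℕ → Bool) : Monotone (hlam · y) :=
  monotone_nat_of_le_succ fun _ => Nat.le_add_right _ _

lemma le_hlam_self (hy : Recurrent y) (i : ℕ) : i ≤ hlam i y := by
  induction i with
  | zero => rfl
  | succ i ih =>
    have := (Nat.sInf_mem (hy (hlam i y))).1
    rw [hlam_succ]
    omega

lemma apply_hlam_succ_sub {k i : ℕ} (hi : i ≤ hlam k y) :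
    y (hlam (k + 1) y - i) = y (hlam k y - i) := by
  rw [hlam_succ]
  rcases (recSet y (hlam k y)).eq_empty_or_nonempty with hempty | hne
  · rw [hempty, Nat.sInf_empty, add_zero]
  · rw [show hlam k y + sInf (recSet y (hlam k y)) - i
        = sInf (recSet y (hlam k y)) + (hlam k y - i) by omega]
    exact (Nat.sInf_mem hne).2 _ (Nat.sub_le _ _)

lemma apply_hlam_sub {j k i : ℕ} (hjk : j ≤ k) (hi : i ≤ hlam j y) :
    y (hlam k y - i) = y (hlam j y - i) := by
  induction k, hjk using Nat.le_induction with
  | base => rfl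
  | succ k hjk ih => rw [apply_hlam_succ_sub (hi.trans (hlam_mono y hjk)), ih]

lemma isLeast_recSet_of_reverse {h τ : ℕ} (hτ : IsLeast (recSet a h) τ)
    (hb : ∀ u ≤ h + τ, b u = a (h + τ - u)) : IsLeast (recSet b h) τ := by
  have hb' : ∀ u ≤ h, b u = a (h - u) := by
    intro u hu
    rw [hb u (by omega), show h + τ - u = τ + (h - u) by omega, hτ.1.2 _ (Nat.sub_le _ _)]
  refine ⟨⟨hτ.1.1, fun i hi => ?_⟩, fun t ⟨ht, htb⟩ => ?_⟩
  · rw [hb _ (by omega), hb' i hi]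
    congr 1
    omega
  · -- a shorter period `t` of the reversed window would give the period `τ - t` of `a`
    by_contra! hlt
    have hmem : τ - t ∈ recSet a h := by
      refine ⟨by omega, fun u hu => ?_⟩
      have := htb (h - u) (Nat.sub_le _ _)
      rwa [hb _ (by omega), hb' _ (Nat.sub_le _ _), show h + τ - (t + (h - u)) = τ - t + u by omega,
        Nat.sub_sub_self hu] at this
    have := hτ.2 hmem
    omega

lemma hlam_of_reverse (ha : Recurrent a) {k : ℕ}
    (hb : ∀ i ≤ hlam k a, b i = a (hlam k a - i)) {j : ℕ} (hjk : j ≤ k) : hlam j b = hlam j a := by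
  induction j with
  | zero => rfl
  | succ j ih =>
    have hτ : IsLeast (recSet b (hlam j a)) (sInf (recSet a (hlam j a))) := by
      refine isLeast_recSet_of_reverse (isLeast_csInf (ha _)) fun u hu => ?_
      rw [← hlam_succ] at hu ⊢
      rw [hb u (hu.trans (hlam_mono a hjk)), apply_hlam_sub hjk hu]
    rw [hlam_succ, hlam_succ, ih (by omega), hτ.csInf_eq]

lemma hlam_eq_iff_of_reverse (ha : Recurrent a) (hb : Recurrent b) {n : ℕ}
    (hab : ∀ i ≤ n, b i = a (n - i)) (k : ℕ) : hlam k a = n ↔ hlam k b = n := by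
  constructor
  · rintro rfl
    exact hlam_of_reverse ha hab le_rfl
  · intro hn
    subst hn
    refine hlam_of_reverse hb (fun i hi => ?_) le_rfl
    rw [hab _ (Nat.sub_le _ _), Nat.sub_sub_self hi]

end Combinatorics

def future (ω : BSeq) : ℕ → Bool := fun j => ω j

lemma lam_eq_hlam_future (k : ℕ) (ω : BSeq) : lam k ω = hlam k (future ω) := by
  induction k with
  | zero => rfl
  | succ k ih => simp only [lam, hlam_succ, recSet, future, ih, Nat.cast_add]

lemma tilSeq_eq {ω : BSeq} (hω : Recurrent (future ω)) {k i : ℕ} (hi : i ≤ hlam k (future ω)) :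
    tilSeq ω i = future ω (hlam k (future ω) - i) := by
  have hii : i ≤ hlam i (future ω) := le_hlam_self hω i
  have hdiag : tilSeq ω i = future ω (hlam i (future ω) - i) := by
    simp only [tilSeq, tildeX, future, lam_eq_hlam_future, Nat.cast_sub hii]
  rw [hdiag]
  rcases le_total i k with hik | hki
  · exact (apply_hlam_sub hik hii).symm
  · exact apply_hlam_sub hki hi

lemma hlam_tilSeq {ω : BSeq} (hω : Recurrent (future ω)) (k : ℕ) :
    hlam k (tilSeq ω) = lam k ω := by
  rw [lam_eq_hlam_future]
  exact hlam_of_reverse hω (fun _ => tilSeq_eq hω) le_rfl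

lemma shift_iterate_apply (t : ℕ) (ω : BSeq) (m : ℤ) : shift^[t] ω m = ω (m + t) := by
  induction t generalizing ω with
  | zero => simp
  | succ t ih =>
    rw [Function.iterate_succ_apply, ih]
    simp only [shift, Nat.cast_succ, add_assoc]

lemma past_shift_iterate {n i : ℕ} (ω : BSeq) (hi : i ≤ n) :
    past (shift^[n] ω) i = future ω (n - i) := by
  simp only [past, future, shift_iterate_apply, Nat.cast_sub hi, neg_add_eq_sub]

def shiftEquiv : BSeq ≃ᵐ BSeq where
  toFun := shift
  invFun ω m := ω (m - 1)
  left_inv ω := funext fun m => congrArg ω (sub_add_cancel m 1)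
  right_inv ω := funext fun m => congrArg ω (add_sub_cancel_right m 1)
  measurable_toFun := measurable_pi_lambda _ fun _ => measurable_pi_apply _
  measurable_invFun := measurable_pi_lambda _ fun _ => measurable_pi_apply _

lemma measurableEmbedding_shift_iterate (n : ℕ) : MeasurableEmbedding (shift^[n]) := by
  induction n with
  | zero => exact MeasurableEmbedding.id
  | succ n ih => exact ih.comp shiftEquiv.measurableEmbedding

lemma ae_recurrent_future {μ : Measure BSeq} [IsFiniteMeasure μ]
    (hstat : MeasurePreserving shift μ μ) : ∀ᵐ ω ∂μ, Recurrent (future ω) :=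
  ae_recurrent_of_conservative hstat.conservative (continuous_pi fun _ => continuous_apply _)
    fun ω i => by simp [future, shift]

lemma ae_recurrent_past {μ : Measure BSeq} [IsFiniteMeasure μ]
    (hstat : MeasurePreserving shift μ μ) : ∀ᵐ ω ∂μ, Recurrent (past ω) :=
  ae_recurrent_of_conservative (hstat.symm shiftEquiv).conservative
    (continuous_pi fun _ => continuous_apply _) fun ω i => by
      change ω (-(i : ℤ) - 1) = ω (-((i + 1 : ℕ) : ℤ))
      push_cast
      ring_nf

lemma tilde_event_iff {ω : BSeq} {k n : ℕ} {x : ℕ → Bool} (hf : Recurrent (future ω))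
    (hb : Recurrent (past (shift^[n] ω))) :
    ((∀ i ≤ n, tilSeq ω i = x i) ∧ hlam k (tilSeq ω) = n) ↔
      ((∀ i ≤ n, past (shift^[n] ω) i = x i) ∧ hlam k (past (shift^[n] ω)) = n) := by
  rw [hlam_tilSeq hf, lam_eq_hlam_future,
    ← hlam_eq_iff_of_reverse hf hb (fun _ => past_shift_iterate ω)]
  refine and_congr_left fun hn => forall₂_congr fun i hi => ?_
  rw [tilSeq_eq hf (hi.trans hn.ge), hn, past_shift_iterate ω hi]

theorem tilde_joint_law_general (μ : Measure BSeq) [IsProbabilityMeasure μ]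
    (hstat : MeasurePreserving shift μ μ) (k : ℕ) (n : ℕ) (x : ℕ → Bool) :
    μ {ω | (∀ i : ℕ, i ≤ n → tilSeq ω i = x i) ∧ hlam k (tilSeq ω) = n} =
      μ {ω | (∀ i : ℕ, i ≤ n → past ω i = x i) ∧ hlam k (past ω) = n} := by
  have hT : MeasurePreserving (shift^[n]) μ μ := hstat.iterate n
  calc _ = μ (shift^[n] ⁻¹' {ω | (∀ i ≤ n, past ω i = x i) ∧ hlam k (past ω) = n}) := by
        refine measure_congr (eventuallyEq_set.2 ?_)
        filter_upwards [ae_recurrent_future hstat,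
          hT.quasiMeasurePreserving.ae (ae_recurrent_past hstat)] with ω hf hb
        exact tilde_event_iff hf hb
    _ = _ := hT.measure_preimage_emb (measurableEmbedding_shift_iterate n) _

/-- For every `k ≥ 1`, `n ≥ 0` and binary string `x_{-n}^0`,
`P(X̃_{-n}^0 = x_{-n}^0, λ̂_k(X̃_{-∞}^0) = n) = P(X_{-n}^0 = x_{-n}^0, λ̂_k(X_{-∞}^0) = n)`.
(Here `x j` stands for `x_{-j}`.) -/
theorem tilde_joint_law (μ : Measure BSeq) [IsProbabilityMeasure μ]
    (hstat : MeasurePreserving shift μ μ) (k : ℕ) (hk : 1 ≤ k) (n : ℕ) (x : ℕ → Bool) :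
    μ {ω | (∀ i : ℕ, i ≤ n → tilSeq ω i = x i) ∧ hlam k (tilSeq ω) = n} =
      μ {ω | (∀ i : ℕ, i ≤ n → past ω i = x i) ∧ hlam k (past ω) = n} :=
  tilde_joint_law_general μ hstat k n x
end

section
/- Let {X_n} be stationary ergodic binary. If the backward return times τ̂_k satisfy R(τ̂_{k+1} − 1) ≤ τ̂_{k+1} infinitely often and τ̂_k → ∞, then the process entropy H equals 0, where R(l) is the recurrence time of the length-(l+1) past. -/
open MeasureTheory Filter Finset

/-! Along the indices `k` with `R(τ̂_{k+1} - 1) ≤ τ̂_{k+1}`, the recurrence time of the past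
`X_{-τ̂_{k+1}+1}^0` equals `τ̂_{k+1}`, so the past `X_{-2τ̂_{k+1}+1}^0` is a square `uu`; as
`τ̂_k → ∞`, almost every past ends in arbitrarily long squares.

By stationarity, for every `N` the probability that no square `uu` with `N ≤ |u|` and
`|uu| ≤ p` ends at a given time tends to `0` as `p → ∞`. Parse a word of length `M` from
its end, stripping the first half `u` of a square `uu` with `|u| ≥ N` whenever possible and a
single letter otherwise. Since `uu v` is determined by `|u|` and `u v`, at most `4^K c^M` words
have at most `K` single letters, for any `c > 1` once `N` is large; and by Markov's inequality,
typical words have only `o(M)` of them. Splitting the block entropy along this dichotomy gives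
`H ≤ log₂ c` for every `c > 1`. -/

open Real
open scoped Topology

lemma exists_sum_Icc_pow_sub_le_half {c : ℝ} (hc : 1 < c) :
    ∃ N, ∀ m, ∑ n ∈ Icc N m, c ^ (m - n) ≤ c ^ m / 2 := by
  obtain ⟨N, hN⟩ :=
    ((tendsto_pow_atTop_atTop_of_one_lt hc).eventually_ge_atTop (2 * c / (c - 1))).exists
  refine ⟨N, fun m => ?_⟩
  have hc1 : 0 < c - 1 := by linarith
  rcases lt_or_ge m N with hm | hm
  · rw [Icc_eq_empty (by omega), sum_empty]
    positivity
  have hgeom : ∑ n ∈ Icc N m, c ^ (m - n) = (c ^ (m + 1 - N) - 1) / (c - 1) := by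
    rw [← Ico_add_one_right_eq_Icc, sum_Ico_reflect _ _ le_rfl, Nat.sub_self, ← range_eq_Ico,
      geom_sum_eq hc.ne']
  have hsplit : c ^ m = c ^ (m + 1 - N) * c ^ N / c := by
    rw [← pow_add, Nat.sub_add_cancel (by omega), pow_succ,
      mul_div_cancel_right₀ _ (by positivity)]
  rw [hgeom, div_le_iff₀ hc1, hsplit]
  rw [div_le_iff₀ hc1] at hN
  have : 0 < c ^ (m + 1 - N) := by positivity
  field_simp
  nlinarith

lemma Real.sum_negMulLog_le {ι : Type*} (s : Finset ι) {p : ι → ℝ}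
    (hp : ∀ i ∈ s, 0 ≤ p i) :
    ∑ i ∈ s, negMulLog (p i) ≤ (∑ i ∈ s, p i) * log #s + negMulLog (∑ i ∈ s, p i) := by
  rcases s.eq_empty_or_nonempty with rfl | hs
  · simp
  have hn : (0 : ℝ) < #s := by exact_mod_cast hs.card_pos
  have hjensen := concaveOn_negMulLog.le_map_sum (t := s) (w := fun _ => (#s : ℝ)⁻¹)
    (fun _ _ => by positivity) (by simp [hn.ne']) (p := p) fun i hi => Set.mem_Ici.2 (hp i hi)
  simp only [smul_eq_mul, ← mul_sum] at hjensen
  rw [negMulLog_mul, negMulLog, log_inv] at hjensen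
  have := mul_le_mul_of_nonneg_left hjensen hn.le
  field_simp at this
  linarith

lemma Real.log_natCast_le_log {n : ℕ} {x : ℝ} (hn : (n : ℝ) ≤ x) (hx : 1 ≤ x) :
    log n ≤ log x := by
  rcases n.eq_zero_or_pos with rfl | hn0
  · simpa using log_nonneg hx
  · exact log_le_log (by exact_mod_cast hn0) hn

lemma Real.sum_negMulLog_le_mul_log_add_one {ι : Type*} (s : Finset ι) {p : ι → ℝ}
    (hp : ∀ i ∈ s, 0 ≤ p i) {x : ℝ} (hs : (#s : ℝ) ≤ x) (hx : 1 ≤ x) :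
    ∑ i ∈ s, negMulLog (p i) ≤ (∑ i ∈ s, p i) * log x + 1 := by
  have hq : 0 ≤ ∑ i ∈ s, p i := sum_nonneg hp
  linarith [sum_negMulLog_le s hp, negMulLog_le_one_sub_self hq,
    mul_le_mul_of_nonneg_left (log_natCast_le_log hs hx) hq]

namespace SquareParsing

open Classical

variable {α : Type*}

def IsLongSquarePrefix (N : ℕ) (s : List α) (n : ℕ) : Prop :=
  N ≤ n ∧ 1 ≤ n ∧ 2 * n ≤ s.length ∧ s.take n = (s.drop n).take n

def HasLongSquarePrefix (N : ℕ) (s : List α) : Prop := ∃ n, IsLongSquarePrefix N s n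

noncomputable def minSquareHalf (N : ℕ) (s : List α) : ℕ := sInf {n | IsLongSquarePrefix N s n}

lemma HasLongSquarePrefix.isLongSquarePrefix_minSquareHalf {N : ℕ} {s : List α}
    (h : HasLongSquarePrefix N s) :
    IsLongSquarePrefix N s (minSquareHalf N s) :=
  Nat.sInf_mem h

lemma not_hasLongSquarePrefix_nil (N : ℕ) : ¬ HasLongSquarePrefix N ([] : List α) := by
  rintro ⟨n, -, hn, hlen, -⟩
  simp at hlen
  omega

lemma HasLongSquarePrefix.of_prefix {N : ℕ} {s l : List α} (h : HasLongSquarePrefix N s)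
    (hsl : s <+: l) : HasLongSquarePrefix N l := by
  obtain ⟨n, hN, hn, hlen, hsq⟩ := h
  obtain ⟨t, rfl⟩ := hsl
  refine ⟨n, hN, hn, by simp; omega, ?_⟩
  rw [List.take_append_of_le_length (by omega), List.drop_append_of_le_length (by omega),
    List.take_append_of_le_length (by simp; omega), hsq]

/-- The number of single letters in the greedy parsing of `s` that repeatedly strips the first
half of the shortest square prefix `uu` with `N ≤ |u|`, and otherwise the first letter. -/
noncomputable def parseDefect (N : ℕ) : List α → ℕ
  | [] => 0
  | a :: s =>
    if h : HasLongSquarePrefix N (a :: s) then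
      parseDefect N ((a :: s).drop (minSquareHalf N (a :: s)))
    else parseDefect N s + 1
termination_by s => s.length
decreasing_by
  · have := h.isLongSquarePrefix_minSquareHalf.2.1
    simp only [List.length_drop, List.length_cons]
    omega
  · simp

lemma parseDefect_of_hasLongSquarePrefix {N : ℕ} {s : List α} (h : HasLongSquarePrefix N s) :
    parseDefect N s = parseDefect N (s.drop (minSquareHalf N s)) := by
  cases s with
  | nil => exact absurd h (not_hasLongSquarePrefix_nil N)
  | cons a s => rw [parseDefect, dif_pos h]

lemma parseDefect_cons_of_not {N : ℕ} {a : α} {s : List α}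
    (h : ¬ HasLongSquarePrefix N (a :: s)) :
    parseDefect N (a :: s) = parseDefect N s + 1 := by
  rw [parseDefect, dif_neg h]

lemma parseDefect_le_card_filter (N : ℕ) (s : List α) :
    parseDefect N s ≤ #{j ∈ range s.length | ¬ HasLongSquarePrefix N (s.drop j)} := by
  fun_induction parseDefect N s with
  | case1 => simp
  | case2 a s h ih =>
    set l := a :: s
    have hq : minSquareHalf N l ≤ l.length := by
      have := h.isLongSquarePrefix_minSquareHalf.2.2.1
      omega
    simp only [card_filter, List.length_drop, List.drop_drop] at ih ⊢
    rw [← Nat.add_sub_cancel' hq, sum_range_add]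
    exact ih.trans (Nat.le_add_left _ _)
  | case3 a s h ih =>
    simp only [card_filter, List.length_cons, sum_range_succ', List.drop_succ_cons,
      List.drop_zero, if_pos h] at ih ⊢
    omega

section Counting

variable [Fintype α] [DecidableEq α]

variable (α) in
def words (m : ℕ) : Finset (List α) := univ.image (List.ofFn : (Fin m → α) → List α)

lemma mem_words {m : ℕ} {s : List α} : s ∈ words α m ↔ s.length = m := by
  refine ⟨?_, fun h => ?_⟩
  · simp only [words, mem_image, mem_univ, true_and]
    rintro ⟨f, rfl⟩
    exact List.length_ofFn
  · subst h
    exact mem_image.2 ⟨fun i => s[i], mem_univ _, List.ofFn_getElem⟩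

lemma card_words (m : ℕ) : #(words α m) = Fintype.card α ^ m := by
  rw [words, card_image_of_injective _ List.ofFn_injective, card_univ, Fintype.card_fun,
    Fintype.card_fin]

lemma card_filter_hasLongSquarePrefix_le {N m B : ℕ} {c X : ℝ}
    (hN : 1 ≤ N)
    (hshorter : ∀ k < m, (#{u ∈ words α k | parseDefect N u ≤ B} : ℝ) ≤ X * c ^ k) :
    (#{s ∈ words α m | parseDefect N s ≤ B ∧ HasLongSquarePrefix N s} : ℝ) ≤
      X * ∑ n ∈ Icc N m, c ^ (m - n) := by
  have hsub : {s ∈ words α m | parseDefect N s ≤ B ∧ HasLongSquarePrefix N s} ⊆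
      (Icc N m).biUnion fun n =>
        {u ∈ words α (m - n) | parseDefect N u ≤ B}.image fun u => u.take n ++ u := by
    intro s hs
    simp only [mem_filter, mem_words] at hs
    obtain ⟨hlen, hB, h⟩ := hs
    obtain ⟨hqN, -, hq, hsq⟩ := h.isLongSquarePrefix_minSquareHalf
    simp only [mem_biUnion, mem_Icc, mem_image, mem_filter, mem_words]
    refine ⟨_, ⟨hqN, by omega⟩, s.drop (minSquareHalf N s), ⟨by simp [hlen], ?_⟩, ?_⟩
    · rwa [← parseDefect_of_hasLongSquarePrefix h]
    · rw [← hsq, List.take_append_drop]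
  calc (#{s ∈ words α m | parseDefect N s ≤ B ∧ HasLongSquarePrefix N s} : ℝ)
      ≤ ∑ n ∈ Icc N m, (#{u ∈ words α (m - n) | parseDefect N u ≤ B} : ℝ) := by
        exact_mod_cast (card_le_card hsub).trans (card_biUnion_le.trans
          (sum_le_sum fun n _ => card_image_le))
    _ ≤ ∑ n ∈ Icc N m, X * c ^ (m - n) := by
        refine sum_le_sum fun n hn => hshorter _ ?_
        simp only [mem_Icc] at hn
        omega
    _ = X * ∑ n ∈ Icc N m, c ^ (m - n) := (mul_sum ..).symm

lemma card_filter_not_hasLongSquarePrefix_le (N m B : ℕ) :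
    #{s ∈ words α (m + 1) | parseDefect N s ≤ B ∧ ¬ HasLongSquarePrefix N s} ≤
      Fintype.card α * #{u ∈ words α m | parseDefect N u + 1 ≤ B} := by
  have hsub : {s ∈ words α (m + 1) | parseDefect N s ≤ B ∧ ¬ HasLongSquarePrefix N s} ⊆
      (univ ×ˢ {u ∈ words α m | parseDefect N u + 1 ≤ B}).image fun p => p.1 :: p.2 := by
    intro s hs
    simp only [mem_filter, mem_words] at hs
    obtain ⟨hlen, hB, h⟩ := hs
    cases s with
    | nil => simp at hlen
    | cons a u =>
      rw [parseDefect_cons_of_not h] at hB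
      simp only [mem_image, mem_product, mem_univ, mem_filter, mem_words, true_and]
      exact ⟨(a, u), ⟨by simpa using hlen, hB⟩, rfl⟩
  calc _ ≤ _ := card_le_card hsub
    _ ≤ _ := card_image_le
    _ = _ := by rw [card_product, card_univ]

theorem card_filter_parseDefect_le [Nonempty α] {N : ℕ} {c : ℝ} (hc : 1 ≤ c)
    (htail : ∀ m, ∑ n ∈ Icc N m, c ^ (m - n) ≤ c ^ m / 2) (m B : ℕ) :
    (#{s ∈ words α m | parseDefect N s ≤ B} : ℝ) ≤ (2 * Fintype.card α) ^ B * c ^ m := by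
  have hN : 1 ≤ N := by
    by_contra! h
    have := htail 0
    simp [Nat.lt_one_iff.1 h] at this
    linarith
  have hα : (1 : ℝ) ≤ 2 * Fintype.card α := by
    have : 1 ≤ Fintype.card α := Fintype.card_pos
    exact_mod_cast (by omega : 1 ≤ 2 * Fintype.card α)
  induction m using Nat.strong_induction_on generalizing B with
  | _ m ih =>
  cases m with
  | zero =>
    calc (#{s ∈ words α 0 | parseDefect N s ≤ B} : ℝ) ≤ #(words α 0) := by
          exact_mod_cast card_filter_le _ _
      _ = 1 := by simp [card_words]
      _ ≤ (2 * Fintype.card α) ^ B * c ^ 0 := by simpa using one_le_pow₀ hα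
  | succ m =>
  rw [← card_filter_add_card_filter_not (fun s => HasLongSquarePrefix N s),
    filter_filter, filter_filter, Nat.cast_add]
  have hgood := (card_filter_hasLongSquarePrefix_le hN fun k hk => ih k hk B).trans
    (mul_le_mul_of_nonneg_left (htail (m + 1)) (by positivity))
  have hbad :
      (#{s ∈ words α (m + 1) | parseDefect N s ≤ B ∧ ¬ HasLongSquarePrefix N s} : ℝ) ≤
      (2 * Fintype.card α) ^ B * c ^ (m + 1) / 2 := by
    refine (Nat.cast_le.2 (card_filter_not_hasLongSquarePrefix_le N m B)).trans ?_
    cases B with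
    | zero => simp; positivity
    | succ B =>
      have := ih m m.lt_succ_self B
      simp only [add_le_add_iff_right, Nat.cast_mul]
      calc (Fintype.card α : ℝ) * #{u ∈ words α m | parseDefect N u ≤ B}
          ≤ Fintype.card α * ((2 * Fintype.card α) ^ B * c ^ m) := by gcongr
        _ ≤ Fintype.card α * ((2 * Fintype.card α) ^ B * c ^ (m + 1)) := by
          gcongr
          exact m.le_succ
        _ = _ := by ring
  linarith

end Counting

end SquareParsing

lemma tauhat_succ (y : ℕ → Bool) (k : ℕ) :
    tauhat (k + 1) y = sInf {t | 0 < t ∧ ∀ i ≤ hlam k y, y (t + i) = y i} := by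
  simp [tauhat, hlam]

lemma tauhat_le_hlam (y : ℕ → Bool) (k : ℕ) : tauhat k y ≤ hlam k y := Nat.sub_le _ _

lemma exists_return_of_tendsto_tauhat {y : ℕ → Bool}
    (h : Tendsto (fun k => tauhat k y) atTop atTop) (l : ℕ) :
    ∃ j, l + 1 ≤ j ∧ ∀ i ≤ l, y (j + i) = y i := by
  obtain ⟨k, hk, hk'⟩ := ((h.eventually_ge_atTop (l + 1)).and
    (((tendsto_add_atTop_iff_nat 1).2 h).eventually_ge_atTop (l + 1))).exists
  rw [tauhat_succ] at hk'
  obtain ⟨-, hret⟩ := Nat.sInf_mem (Nat.nonempty_of_pos_sInf (l.succ_pos.trans_le hk'))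
  exact ⟨_, hk', fun i hi => hret i (by linarith [tauhat_le_hlam y k])⟩

namespace BSeq

open Classical SquareParsing

/-- `ω t, ω (t - 1), …, ω (t - m + 1)`: read backwards in time, so that a square prefix of
`window ω t m` is a square ending at time `t`. -/
def window (ω : BSeq) (t : ℤ) (m : ℕ) : List Bool := List.ofFn fun i : Fin m => ω (t - i)

@[simp] lemma length_window (ω : BSeq) (t : ℤ) (m : ℕ) : (window ω t m).length = m :=
  List.length_ofFn

lemma window_eq_window_iff {ω ω' : BSeq} {t t' : ℤ} {m : ℕ} :
    window ω t m = window ω' t' m ↔ ∀ i < m, ω (t - i) = ω' (t' - i) := by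
  simp only [window, List.ofFn_inj, funext_iff, Fin.forall_iff]

lemma window_drop (ω : BSeq) (t : ℤ) (m j : ℕ) :
    (window ω t m).drop j = window ω (t - j) (m - j) := by
  apply List.ext_getElem (by simp)
  intro i _ _
  simp only [window, List.getElem_drop, List.getElem_ofFn]
  congr 1
  push_cast
  ring

lemma window_take (ω : BSeq) (t : ℤ) {m j : ℕ} (h : j ≤ m) :
    (window ω t m).take j = window ω t j := by
  apply List.ext_getElem (by simpa using h)
  intro i _ _
  simp [window]

lemma window_prefix (ω : BSeq) (t : ℤ) {m m' : ℕ} (h : m ≤ m') :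
    window ω t m <+: window ω t m' := by
  rw [← window_take ω t h]
  exact List.take_prefix _ _

lemma shift_iterate_apply (p : ℕ) (ω : BSeq) (z : ℤ) : (shift^[p] ω) z = ω (z + p) := by
  induction p generalizing ω with
  | zero => simp
  | succ p ih =>
    rw [Function.iterate_succ_apply, ih]
    simp only [shift]
    congr 1
    push_cast
    ring

lemma window_shift_iterate (ω : BSeq) (t : ℤ) (m p : ℕ) :
    window (shift^[p] ω) t m = window ω (t + p) m := by
  simp only [window, shift_iterate_apply]
  congr 2
  ext i
  congr 1
  ring

lemma measurableSet_setOf_window (t : ℤ) (m : ℕ) (P : List Bool → Prop) :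
    MeasurableSet {ω : BSeq | P (window ω t m)} := by
  have hg : Measurable fun (ω : BSeq) (i : Fin m) => ω (t - i) :=
    measurable_pi_lambda _ fun i => measurable_pi_apply _
  exact hg (Set.toFinite {f : Fin m → Bool | P (List.ofFn f)}).measurableSet

def cylinder (M : ℕ) (w : List Bool) : Set BSeq := (fun ω => window ω M (M + 1)) ⁻¹' {w}

lemma measurableSet_cylinder (M : ℕ) (w : List Bool) : MeasurableSet (cylinder M w) :=
  measurableSet_setOf_window _ _ (· = w)

lemma blockProb_eq_measure_cylinder (μ : Measure BSeq) (M : ℕ) (ω : BSeq) :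
    blockProb μ M (fun i => ω i) = μ (cylinder M (window ω M (M + 1))) := by
  unfold blockProb cylinder
  congr 1
  ext ω'
  simp only [Set.mem_ofPred_eq, Set.mem_preimage, Set.mem_singleton_iff, window_eq_window_iff]
  constructor
  · intro h i hi
    simpa [Nat.cast_sub (by omega : i ≤ M)] using h (M - i) (by omega)
  · intro h i hi
    simpa [Nat.cast_sub hi] using h (M - i) (by omega)

lemma entropyTerm_eq_sum_negMulLog (μ : Measure BSeq) [IsFiniteMeasure μ] (M : ℕ) :
    entropyTerm μ M =
      (∑ w ∈ words Bool (M + 1), negMulLog (μ.real (cylinder M w))) / ((M + 1) * log 2) := by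
  have hsimple : ∀ ω : BSeq, logb 2 (blockProb μ M (fun i => ω i)).toReal =
      ∑ w ∈ words Bool (M + 1),
        (cylinder M w).indicator (fun _ => logb 2 (μ.real (cylinder M w))) ω := by
    intro ω
    rw [sum_eq_single_of_mem (window ω M (M + 1)) (mem_words.2 (length_window ..)),
      Set.indicator_of_mem (show ω ∈ cylinder M _ from rfl), blockProb_eq_measure_cylinder,
      measureReal_def]
    intro w _ hw
    exact Set.indicator_of_notMem (fun h => hw h.symm) _
  rw [entropyTerm, integral_congr_ae (.of_forall hsimple), integral_finsetSum _ fun w _ =>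
    (integrable_const _).indicator (measurableSet_cylinder M w)]
  simp only [integral_indicator_const _ (measurableSet_cylinder _ _), smul_eq_mul, negMulLog,
    logb, neg_mul, sum_neg_distrib, mul_div_assoc', ← sum_div]
  field_simp

lemma sum_measureReal_cylinder (μ : Measure BSeq) [IsFiniteMeasure μ] (M : ℕ)
    (S : Finset (List Bool)) :
    ∑ w ∈ S, μ.real (cylinder M w) = μ.real {ω | window ω M (M + 1) ∈ S} :=
  sum_measureReal_preimage_singleton S fun w _ => measurableSet_cylinder M w

theorem entropyTerm_le_add_measureReal_lt_parseDefect (μ : Measure BSeq)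
    [IsProbabilityMeasure μ] {N : ℕ} {c : ℝ} (hc : 1 < c)
    (htail : ∀ m, ∑ n ∈ Icc N m, c ^ (m - n) ≤ c ^ m / 2) (M K : ℕ) :
    entropyTerm μ M ≤ 2 * K / (M + 1) + logb 2 c +
      μ.real {ω | K < parseDefect N (window ω M (M + 1))} + 2 / ((M + 1) * log 2) := by
  set W := words Bool (M + 1)
  set q := μ.real {ω | K < parseDefect N (window ω M (M + 1))}
  have hp : ∀ w ∈ W, 0 ≤ μ.real (cylinder M w) := fun _ _ => measureReal_nonneg
  have hgood : ∑ w ∈ W with parseDefect N w ≤ K, negMulLog (μ.real (cylinder M w)) ≤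
      log (4 ^ K * c ^ (M + 1)) + 1 := by
    have hcard : (#{w ∈ W | parseDefect N w ≤ K} : ℝ) ≤ 4 ^ K * c ^ (M + 1) := by
      have := card_filter_parseDefect_le (α := Bool) hc.le htail (M + 1) K
      norm_num at this
      exact this
    have hx : (1 : ℝ) ≤ 4 ^ K * c ^ (M + 1) :=
      one_le_mul_of_one_le_of_one_le (one_le_pow₀ (by norm_num)) (one_le_pow₀ hc.le)
    refine (sum_negMulLog_le_mul_log_add_one (hs := hcard) (hx := hx)
      (hp := fun w hw => hp w (filter_subset _ _ hw))).trans ?_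
    gcongr ?_ + 1
    exact mul_le_of_le_one_left (log_nonneg hx)
      ((sum_measureReal_cylinder μ M _).trans_le measureReal_le_one)
  have hbad : ∑ w ∈ W with ¬ parseDefect N w ≤ K, negMulLog (μ.real (cylinder M w)) ≤
      q * log (2 ^ (M + 1)) + 1 := by
    have hmass : ∑ w ∈ W with ¬ parseDefect N w ≤ K, μ.real (cylinder M w) = q := by
      rw [sum_measureReal_cylinder]
      congr 1
      ext ω
      simp [W, mem_words]
    have hcard : (#{w ∈ W | ¬ parseDefect N w ≤ K} : ℝ) ≤ 2 ^ (M + 1) := by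
      exact_mod_cast (card_filter_le _ _).trans (card_words (α := Bool) (M + 1)).le
    simpa only [hmass] using
      sum_negMulLog_le_mul_log_add_one (hs := hcard) (hx := one_le_pow₀ (by norm_num))
        (hp := fun w hw => hp w (filter_subset _ _ hw))
  rw [entropyTerm_eq_sum_negMulLog, ← sum_filter_add_sum_filter_not W (parseDefect N · ≤ K),
    div_le_iff₀ (by positivity)]
  refine (add_le_add hgood hbad).trans_eq ?_
  rw [log_mul (by positivity) (by positivity), log_pow, log_pow, log_pow, logb,
    show (4 : ℝ) = 2 ^ 2 by norm_num, log_pow]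
  field_simp
  push_cast
  ring

def PastSquare (ω : BSeq) (n : ℕ) : Prop := ∀ i < n, ω (-(n : ℤ) - i) = ω (-(i : ℤ))

lemma PastSquare.hasLongSquarePrefix_window {ω : BSeq} {N n : ℕ} (h : PastSquare ω n)
    (hN : N ≤ n) (hn : 1 ≤ n) : HasLongSquarePrefix N (window ω 0 (2 * n)) := by
  refine ⟨n, hN, hn, by simp, ?_⟩
  rw [window_take _ _ (by omega), window_drop, window_take _ _ (by omega), window_eq_window_iff]
  intro i hi
  simpa using (h i hi).symm

def noLongSquare (N p : ℕ) (t : ℤ) : Set BSeq :=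
  {ω | ¬ HasLongSquarePrefix N (window ω t (p + 1))}

lemma measurableSet_noLongSquare (N p : ℕ) (t : ℤ) : MeasurableSet (noLongSquare N p t) :=
  measurableSet_setOf_window _ _ fun w => ¬ HasLongSquarePrefix N w

lemma parseDefect_window_le (N M : ℕ) (ω : BSeq) :
    parseDefect N (window ω M (M + 1)) ≤ #{p ∈ range (M + 1) | ω ∈ noLongSquare N p p} := by
  refine (parseDefect_le_card_filter N _).trans (card_le_card_of_injOn (M - ·) ?_ ?_)
  · intro j hj
    simp only [coe_filter, mem_range, length_window, Set.mem_ofPred_eq, window_drop] at hj ⊢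
    refine ⟨by omega, ?_⟩
    rw [noLongSquare, Set.mem_ofPred_eq, Nat.cast_sub (show j ≤ M by omega),
      show M - j + 1 = M + 1 - j by omega]
    exact hj.2
  · intro j hj j' hj' h
    simp only [coe_filter, mem_range, length_window, Set.mem_ofPred_eq] at hj hj' h
    omega

lemma measureReal_setOf_window_shift {μ : Measure BSeq} (hμ : MeasurePreserving shift μ μ)
    (p m : ℕ) (P : List Bool → Prop) :
    μ.real {ω | P (window ω p m)} = μ.real {ω | P (window ω 0 m)} := by
  have : {ω | P (window ω p m)} = shift^[p] ⁻¹' {ω | P (window ω 0 m)} := by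
    ext ω
    simp [window_shift_iterate]
  rw [this, (hμ.iterate p).measureReal_preimage
    (measurableSet_setOf_window 0 m P).nullMeasurableSet]

lemma measureReal_lt_parseDefect_le {μ : Measure BSeq} [IsFiniteMeasure μ]
    (hμ : MeasurePreserving shift μ μ) (N M K : ℕ) :
    μ.real {ω | K < parseDefect N (window ω M (M + 1))} ≤
      (∑ p ∈ range (M + 1), μ.real (noLongSquare N p 0)) / (K + 1) := by
  have hint :
      ∀ p ∈ range (M + 1), Integrable ((noLongSquare N p p).indicator (1 : BSeq → ℝ)) μ :=
    fun p _ => (integrable_const 1).indicator (measurableSet_noLongSquare _ _ _)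
  have hcount (ω : BSeq) :
      ∑ p ∈ range (M + 1), (noLongSquare N p p).indicator (1 : BSeq → ℝ) ω =
      #{p ∈ range (M + 1) | ω ∈ noLongSquare N p p} := by
    simp only [Set.indicator_apply, Pi.one_apply, sum_boole]
  have hmarkov := mul_meas_ge_le_integral_of_nonneg (μ := μ)
    (.of_forall fun ω => (hcount ω).symm ▸ Nat.cast_nonneg _) (integrable_finsetSum _ hint)
    (K + 1)
  rw [integral_finsetSum _ hint] at hmarkov
  simp only [integral_indicator_one (measurableSet_noLongSquare _ _ _), hcount] at hmarkov
  have hstat (p : ℕ) : μ.real (noLongSquare N p p) = μ.real (noLongSquare N p 0) :=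
    measureReal_setOf_window_shift hμ p (p + 1) fun w => ¬ HasLongSquarePrefix N w
  have hsub : {ω | K < parseDefect N (window ω M (M + 1))} ⊆
      {ω | (K + 1 : ℝ) ≤ #{p ∈ range (M + 1) | ω ∈ noLongSquare N p p}} := by
    intro ω hω
    simp only [Set.mem_ofPred_eq] at hω ⊢
    exact_mod_cast hω.trans_le (parseDefect_window_le N M ω)
  rw [le_div_iff₀ (by positivity), mul_comm, ← sum_congr rfl fun p _ => hstat p]
  exact (mul_le_mul_of_nonneg_left (measureReal_mono hsub) (by positivity)).trans hmarkov

lemma tendsto_measureReal_noLongSquare {μ : Measure BSeq} [IsFiniteMeasure μ]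
    (hsq : ∀ᵐ ω ∂μ, ∃ᶠ n in atTop, PastSquare ω n) (N : ℕ) :
    Tendsto (fun p => μ.real (noLongSquare N p 0)) atTop (𝓝 0) := by
  have hanti : Antitone fun p => noLongSquare N p 0 := fun p p' hp ω hω h =>
    hω (h.of_prefix (window_prefix ω 0 (by omega)))
  have hnull : μ (⋂ p, noLongSquare N p 0) = 0 := by
    rw [measure_eq_zero_iff_ae_notMem]
    filter_upwards [hsq] with ω hω
    obtain ⟨n, hsqn, hn⟩ := (hω.and_eventually (eventually_ge_atTop (max N 1))).exists
    simp only [Set.mem_iInter, not_forall]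
    refine ⟨2 * n - 1, not_not.2 ?_⟩
    rw [show 2 * n - 1 + 1 = 2 * n by omega]
    exact hsqn.hasLongSquarePrefix_window (le_of_max_le_left hn) (le_of_max_le_right hn)
  have := tendsto_measure_iInter_atTop
    (fun p => (measurableSet_noLongSquare N p 0).nullMeasurableSet) hanti
    ⟨0, measure_ne_top μ _⟩
  rw [hnull] at this
  exact (ENNReal.tendsto_toReal ENNReal.zero_ne_top).comp this

lemma entropyTerm_nonneg (μ : Measure BSeq) [IsProbabilityMeasure μ] (M : ℕ) :
    0 ≤ entropyTerm μ M := by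
  rw [entropyTerm_eq_sum_negMulLog]
  exact div_nonneg (sum_nonneg fun w _ => negMulLog_nonneg measureReal_nonneg measureReal_le_one)
    (by positivity)

theorem le_two_mul_add_logb_of_tendsto_entropyTerm {μ : Measure BSeq} [IsProbabilityMeasure μ]
    (hμ : MeasurePreserving shift μ μ) (hsq : ∀ᵐ ω ∂μ, ∃ᶠ n in atTop, PastSquare ω n) {H : ℝ}
    (hent : Tendsto (entropyTerm μ) atTop (𝓝 H)) {c δ : ℝ} (hc : 1 < c) (hδ : 0 < δ) :
    H ≤ 2 * δ + logb 2 c := by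
  obtain ⟨N, htail⟩ := exists_sum_Icc_pow_sub_le_half hc
  set u := fun p => μ.real (noLongSquare N p 0)
  set avg := fun M : ℕ => ((M : ℝ) + 1)⁻¹ * ∑ p ∈ range (M + 1), u p
  have hbound (M : ℕ) :
      entropyTerm μ M ≤ 2 * δ + logb 2 c + δ⁻¹ * avg M + 2 / ((M + 1) * log 2) := by
    set K := ⌊δ * (M + 1)⌋₊
    have hK : (K : ℝ) ≤ δ * (M + 1) := Nat.floor_le (by positivity)
    have hK' : δ * (M + 1) < K + 1 := Nat.lt_floor_add_one _
    have h1 : 2 * (K : ℝ) / (M + 1) ≤ 2 * δ := by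
      rw [div_le_iff₀ (by positivity)]
      linarith
    have h2 : (∑ p ∈ range (M + 1), u p) / (K + 1) ≤ δ⁻¹ * avg M := by
      rw [← mul_assoc, ← mul_inv, mul_comm, ← div_eq_mul_inv]
      exact div_le_div_of_nonneg_left (sum_nonneg fun p _ => measureReal_nonneg)
        (by positivity) hK'.le
    linarith [entropyTerm_le_add_measureReal_lt_parseDefect μ hc htail M K,
      measureReal_lt_parseDefect_le hμ N M K]
  have havg : Tendsto avg atTop (𝓝 0) := by
    have := (tendsto_measureReal_noLongSquare hsq N).cesaro.comp
      (tendsto_add_atTop_nat 1)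
    simpa [avg, Function.comp_def] using this
  have hlog : Tendsto (fun M : ℕ => 2 / ((M + 1) * log 2)) atTop (𝓝 0) :=
    tendsto_const_nhds.div_atTop ((tendsto_natCast_atTop_atTop.atTop_add
      tendsto_const_nhds).atTop_mul_const (log_pos one_lt_two))
  have hlim := ((tendsto_const_nhds (x := 2 * δ + logb 2 c)).add (havg.const_mul δ⁻¹)).add hlog
  rw [mul_zero, add_zero, add_zero] at hlim
  exact le_of_tendsto_of_tendsto' hent hlim hbound

theorem eq_zero_of_tendsto_entropyTerm {μ : Measure BSeq} [IsProbabilityMeasure μ]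
    (hμ : MeasurePreserving shift μ μ) (hsq : ∀ᵐ ω ∂μ, ∃ᶠ n in atTop, PastSquare ω n) {H : ℝ}
    (hent : Tendsto (entropyTerm μ) atTop (𝓝 H)) : H = 0 := by
  refine le_antisymm (le_of_forall_pos_le_add fun ε hε => ?_)
    (ge_of_tendsto' hent (entropyTerm_nonneg μ))
  have := le_two_mul_add_logb_of_tendsto_entropyTerm hμ hsq hent (c := 2 ^ (ε / 2)) (δ := ε / 4)
    (one_lt_rpow one_lt_two (by positivity)) (by positivity)
  rw [logb_rpow two_pos one_lt_two.ne'] at this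
  linarith

lemma pastSquare_of_Rrec_le {ω : BSeq} {n : ℕ} (hn : 1 ≤ n) (hR : Rrec (n - 1) ω ≤ n)
    (hret : ∃ j, n ≤ j ∧ ∀ i ≤ n - 1, past ω (j + i) = past ω i) : PastSquare ω n := by
  -- without a return, `Rrec (n - 1) ω` would be the junk value `sInf ∅ = 0`
  have hne :
      {j : ℕ | n - 1 + 1 ≤ j ∧ ∀ i ≤ n - 1, ω (-(j : ℤ) - i) = ω (-(i : ℤ))}.Nonempty := by
    obtain ⟨j, hj, hji⟩ := hret
    exact ⟨j, by omega, fun i hi => by simpa [past, sub_eq_neg_add] using hji i hi⟩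
  obtain ⟨hRn, hsq⟩ : n - 1 + 1 ≤ Rrec (n - 1) ω ∧
      ∀ i ≤ n - 1, ω (-(Rrec (n - 1) ω : ℤ) - i) = ω (-(i : ℤ)) :=
    Nat.sInf_mem hne
  rw [show Rrec (n - 1) ω = n by omega] at hsq
  exact fun i hi => hsq i (by omega)

theorem frequently_pastSquare_of_Rrec_le {ω : BSeq}
    (h1 : ∃ᶠ k in atTop, Rrec (tauhat (k + 1) (past ω) - 1) ω ≤ tauhat (k + 1) (past ω))
    (h2 : Tendsto (fun k => tauhat k (past ω)) atTop atTop) :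
    ∃ᶠ n in atTop, PastSquare ω n := by
  have h2' := (tendsto_add_atTop_iff_nat 1).2 h2
  refine h2'.frequently ((h1.and_eventually (h2'.eventually_ge_atTop 1)).mono fun k hk => ?_)
  obtain ⟨j, hj, hji⟩ := exists_return_of_tendsto_tauhat h2 (tauhat (k + 1) (past ω) - 1)
  exact pastSquare_of_Rrec_le hk.2 hk.1 ⟨j, by omega, hji⟩

end BSeq

/-- Stationary ergodic binary process: if almost surely
`R(τ̂_{k+1} − 1) ≤ τ̂_{k+1}` infinitely often and `τ̂_k → ∞`, then the process entropy
`H` equals `0`. -/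
theorem entropy_zero_of_overlap (μ : Measure BSeq) [IsProbabilityMeasure μ]
    (herg : Ergodic shift μ) (H : ℝ)
    (hent : Tendsto (entropyTerm μ) atTop (nhds H))
    (h : ∀ᵐ ω ∂μ,
        (∃ᶠ k : ℕ in atTop,
            Rrec (tauhat (k + 1) (past ω) - 1) ω ≤ tauhat (k + 1) (past ω)) ∧
          Tendsto (fun k => tauhat k (past ω)) atTop atTop) :
    H = 0 :=
  BSeq.eq_zero_of_tendsto_entropyTerm herg.toMeasurePreserving
    (h.mono fun _ hω => BSeq.frequently_pastSquare_of_Rrec_le hω.1 hω.2) hent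
end
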